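/- arXiv:1602.03323 — 3 statements merged into one kernel-verified Lean document; each statement's English description precedes it below -/
import Mathlib

section
/- If a general Dirichlet series ∑_{n=1}^∞ a_n e^{-λ_n s} (with (λ_n) strictly increasing, nonnegative, unbounded) converges at a point s₀ ∈ ℂ, then for every δ ∈ (0, π/2) it converges uniformly on the angular region {s ∈ ℂ : |arg(s - s₀)| ≤ π/2 - δ}. -/
open Complex Filter Set
open scoped Real Topology

/-!
Abel summation. With `b n = a n * exp (-λ n * s₀)` and `z = s - s₀` the terms at `s` are
`b n * exp (-λ n * z)`, so a block `∑_{M ≤ n < m}` of them is bounded by the largest block sum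
`∑_{M ≤ k < n} b k` times `‖exp (-λ m * z)‖ + ∑_{M ≤ n < m} ‖exp (-λ n * z) - exp (-λ (n+1) * z)‖`.
Since `λ ≥ 0` the first term is at most `1`, and writing each difference as
`z * ∫_{λ n}^{λ (n+1)} exp (-t * z) dt` bounds the variation by `‖z‖ / Re z ≤ 1 / sin δ` on the
sector. Convergence at `s₀` makes the block sums of `b` eventually small, so the partial sums are
uniformly Cauchy on the sector.
-/

theorem Metric.uniformCauchySeqOn_of_forall_dist_lt {α β γ : Type*} [PseudoMetricSpace α]
    [Nonempty β] [SemilatticeSup β] {F : β → γ → α} {s : Set γ}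
    (h : ∀ ε > 0, ∃ N, ∀ n ≥ N, ∀ x ∈ s, dist (F n x) (F N x) < ε) :
    UniformCauchySeqOn F atTop s := by
  refine Metric.uniformCauchySeqOn_iff.mpr fun ε hε => ?_
  obtain ⟨N, hN⟩ := h (ε / 2) (half_pos hε)
  refine ⟨N, fun m hm n hn x hx => ?_⟩
  calc dist (F m x) (F n x) ≤ dist (F m x) (F N x) + dist (F n x) (F N x) :=
        dist_triangle_right _ _ _
    _ < ε / 2 + ε / 2 := add_lt_add (hN m hm x hx) (hN n hn x hx)
    _ = ε := add_halves ε

theorem UniformCauchySeqOn.exists_tendstoUniformlyOn {α β ι : Type*} [UniformSpace β]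
    [CompleteSpace β] [Nonempty β] [Nonempty ι] [SemilatticeSup ι] {F : ι → α → β} {s : Set α}
    (hF : UniformCauchySeqOn F atTop s) : ∃ f : α → β, TendstoUniformlyOn F f atTop s := by
  have hlim : ∀ x ∈ s, ∃ y, Tendsto (fun i => F i x) atTop (𝓝 y) :=
    fun x hx => cauchySeq_tendsto_of_complete (hF.cauchySeq hx)
  choose! f hf using hlim
  exact ⟨f, hF.tendstoUniformlyOn_of_tendsto hf⟩

theorem Finset.sum_Ico_mul_by_parts {R : Type*} [CommRing R] (b e : ℕ → R)
    {M m : ℕ} (hMm : M ≤ m) :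
    ∑ n ∈ Finset.Ico M m, b n * e n
      = (∑ k ∈ Finset.Ico M m, b k) * e m
        + ∑ n ∈ Finset.Ico M m, (∑ k ∈ Finset.Ico M (n + 1), b k) * (e n - e (n + 1)) := by
  induction m, hMm using Nat.le_induction with
  | base => simp
  | succ m hMm ih =>
    simp only [Finset.sum_Ico_succ_top hMm, ih]
    ring

theorem Finset.norm_sum_Ico_mul_le {R : Type*} [SeminormedCommRing R] (b e : ℕ → R)
    {M m : ℕ} (hMm : M ≤ m) {ε : ℝ}
    (hb : ∀ n ∈ Finset.Icc M m, ‖∑ k ∈ Finset.Ico M n, b k‖ ≤ ε) :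
    ‖∑ n ∈ Finset.Ico M m, b n * e n‖
      ≤ ε * (‖e m‖ + ∑ n ∈ Finset.Ico M m, ‖e n - e (n + 1)‖) := by
  have hε : 0 ≤ ε := (norm_nonneg _).trans (hb M (by simp [hMm]))
  rw [Finset.sum_Ico_mul_by_parts b e hMm, mul_add, Finset.mul_sum]
  refine (norm_add_le _ _).trans (add_le_add ?_ ((norm_sum_le _ _).trans ?_))
  · exact (norm_mul_le _ _).trans
      (mul_le_mul_of_nonneg_right (hb m (by simp [hMm])) (norm_nonneg _))
  · refine Finset.sum_le_sum fun n hn => (norm_mul_le _ _).trans ?_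
    rw [Finset.mem_Ico] at hn
    exact mul_le_mul_of_nonneg_right (hb (n + 1) (by simp; omega)) (norm_nonneg _)

theorem Complex.norm_cexp_sub_cexp_le {z : ℂ} (hz : 0 < z.re) {u v : ℝ} (huv : u ≤ v) :
    ‖cexp (-u * z) - cexp (-v * z)‖
      ≤ ‖z‖ / z.re * (Real.exp (-u * z.re) - Real.exp (-v * z.re)) := by
  have hz0 : z ≠ 0 := ne_zero_of_re_pos hz
  have hdiff : cexp (-u * z) - cexp (-v * z) = z * ∫ t in u..v, cexp (-z * t) := by
    rw [integral_exp_mul_complex (neg_ne_zero.mpr hz0)]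
    field_simp
    ring
  have hnorm : ∀ t : ℝ, ‖cexp (-z * t)‖ = Real.exp (-z.re * t) := fun t => by
    simp [Complex.norm_exp]
  have hintegral : ∫ t in u..v, Real.exp (-z.re * t)
      = (Real.exp (-u * z.re) - Real.exp (-v * z.re)) / z.re := by
    rw [intervalIntegral.integral_comp_mul_left (fun t => Real.exp t) (neg_ne_zero.mpr hz.ne'),
      integral_exp, smul_eq_mul]
    field_simp
    ring
  calc ‖cexp (-u * z) - cexp (-v * z)‖ ≤ ‖z‖ * ∫ t in u..v, ‖cexp (-z * t)‖ := by
        rw [hdiff, norm_mul]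
        exact mul_le_mul_of_nonneg_left
          (intervalIntegral.norm_integral_le_integral_norm huv) (norm_nonneg _)
    _ = _ := by simp only [hnorm, hintegral]; ring

theorem Complex.norm_cexp_sub_cexp_le_of_norm_le {z : ℂ} {C : ℝ} (hC : 0 ≤ C)
    (hz : ‖z‖ ≤ C * z.re) {u v : ℝ} (huv : u ≤ v) :
    ‖cexp (-u * z) - cexp (-v * z)‖ ≤ C * (Real.exp (-u * z.re) - Real.exp (-v * z.re)) := by
  rcases eq_or_ne z 0 with rfl | hz0
  · simp
  have hre : 0 < z.re := pos_of_mul_pos_right ((norm_pos_iff.mpr hz0).trans_le hz) hC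
  calc ‖cexp (-u * z) - cexp (-v * z)‖
      ≤ ‖z‖ / z.re * (Real.exp (-u * z.re) - Real.exp (-v * z.re)) :=
        norm_cexp_sub_cexp_le hre huv
    _ ≤ C * (Real.exp (-u * z.re) - Real.exp (-v * z.re)) :=
        mul_le_mul_of_nonneg_right ((div_le_iff₀ hre).mpr hz) (sub_nonneg.mpr (by gcongr))

theorem Complex.norm_mul_sin_le_re_of_abs_arg_le {z : ℂ} {δ : ℝ} (hδ : 0 ≤ δ)
    (hz : |arg z| ≤ π / 2 - δ) : ‖z‖ * Real.sin δ ≤ z.re := by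
  have hcos : Real.sin δ ≤ Real.cos (arg z) := by
    rw [← Real.cos_pi_div_two_sub, ← Real.cos_abs (arg z)]
    exact Real.cos_le_cos_of_nonneg_of_le_pi (abs_nonneg _) (by linarith [Real.pi_pos]) hz
  calc ‖z‖ * Real.sin δ ≤ ‖z‖ * Real.cos (arg z) := by gcongr
    _ = z.re := norm_mul_cos_arg z

theorem norm_sum_Ico_mul_cexp_le {lam : ℕ → ℝ} (hmono : Monotone lam)
    (hnonneg : ∀ n, 0 ≤ lam n) (b : ℕ → ℂ) {z : ℂ} {C : ℝ} (hC : 0 ≤ C)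
    (hz : ‖z‖ ≤ C * z.re) {M m : ℕ} (hMm : M ≤ m) {ε : ℝ}
    (hb : ∀ n ∈ Finset.Icc M m, ‖∑ k ∈ Finset.Ico M n, b k‖ ≤ ε) :
    ‖∑ n ∈ Finset.Ico M m, b n * cexp (-lam n * z)‖ ≤ (1 + C) * ε := by
  have hε : 0 ≤ ε := (norm_nonneg _).trans (hb M (by simp [hMm]))
  have hre : 0 ≤ z.re := by nlinarith [neg_abs_le z.re, abs_re_le_norm z]
  set f : ℕ → ℝ := fun n => Real.exp (-lam n * z.re)
  have hf_pos : ∀ n, 0 < f n := fun n => Real.exp_pos _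
  have hf_le_one : ∀ n, f n ≤ 1 := fun n =>
    Real.exp_le_one_iff.mpr (by nlinarith [hnonneg n])
  have hnorm : ∀ n, ‖cexp (-lam n * z)‖ = f n := fun n => by simp [f, Complex.norm_exp]
  have hvariation : ∑ n ∈ Finset.Ico M m, ‖cexp (-lam n * z) - cexp (-lam (n + 1) * z)‖
      ≤ C * (f M - f m) := by
    calc _ ≤ ∑ n ∈ Finset.Ico M m, C * (f n - f (n + 1)) := Finset.sum_le_sum fun n _ =>
          norm_cexp_sub_cexp_le_of_norm_le hC hz (hmono n.le_succ)
      _ = C * (f M - f m) := by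
          rw [← Finset.mul_sum, ← neg_sub, ← Finset.sum_Ico_sub f hMm]
          simp
  calc ‖∑ n ∈ Finset.Ico M m, b n * cexp (-lam n * z)‖
      ≤ ε * (f m + C * (f M - f m)) := by
        refine (Finset.norm_sum_Ico_mul_le b _ hMm hb).trans ?_
        rw [hnorm]
        gcongr
    _ ≤ ε * (1 + C) := by
        have hdrop : f M - f m ≤ 1 := by linarith [hf_le_one M, hf_pos m]
        gcongr
        · exact hf_le_one m
        · simpa using mul_le_mul_of_nonneg_left hdrop hC
    _ = (1 + C) * ε := mul_comm _ _

theorem uniformCauchySeqOn_dirichlet_of_cauchySeq {lam : ℕ → ℝ} (hmono : Monotone lam)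
    (hnonneg : ∀ n, 0 ≤ lam n) {a : ℕ → ℂ} {s₀ : ℂ}
    (hconv : CauchySeq fun m => ∑ n ∈ Finset.range m, a n * cexp (-lam n * s₀))
    {C : ℝ} (hC : 0 ≤ C) :
    UniformCauchySeqOn (fun m s => ∑ n ∈ Finset.range m, a n * cexp (-lam n * s)) atTop
      {s | ‖s - s₀‖ ≤ C * (s - s₀).re} := by
  set b : ℕ → ℂ := fun n => a n * cexp (-lam n * s₀)
  refine Metric.uniformCauchySeqOn_of_forall_dist_lt fun ε hε => ?_
  have hε' : 0 < ε / (2 * (1 + C)) := by positivity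
  obtain ⟨N, hN⟩ := Metric.cauchySeq_iff'.mp hconv _ hε'
  refine ⟨N, fun m hm s hs => ?_⟩
  have hshift : ∀ n, a n * cexp (-lam n * s) = b n * cexp (-lam n * (s - s₀)) := fun n => by
    simp only [b, mul_assoc, ← Complex.exp_add]
    congr 2
    ring
  have htail : ∀ n ∈ Finset.Icc N m, ‖∑ k ∈ Finset.Ico N n, b k‖ ≤ ε / (2 * (1 + C)) :=
    fun n hn => by
      rw [Finset.sum_Ico_eq_sub _ (Finset.mem_Icc.mp hn).1, ← dist_eq_norm]
      exact (hN n (Finset.mem_Icc.mp hn).1).le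
  calc dist (∑ n ∈ Finset.range m, a n * cexp (-lam n * s))
        (∑ n ∈ Finset.range N, a n * cexp (-lam n * s))
      = ‖∑ n ∈ Finset.Ico N m, b n * cexp (-lam n * (s - s₀))‖ := by
        rw [dist_eq_norm, ← Finset.sum_Ico_eq_sub _ hm]
        simp only [hshift]
    _ ≤ (1 + C) * (ε / (2 * (1 + C))) :=
        norm_sum_Ico_mul_cexp_le hmono hnonneg b hC hs hm htail
    _ < ε := by field_simp; linarith

theorem stmt_0_general (lam : ℕ → ℝ) (hmono : StrictMono lam) (hnonneg : ∀ n, 0 ≤ lam n)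
    (a : ℕ → ℂ) (s₀ : ℂ) (L : ℂ)
    (hconv : Tendsto (fun m => ∑ n ∈ Finset.range m, a n * Complex.exp (-(lam n : ℂ) * s₀))
      atTop (𝓝 L))
    (δ : ℝ) (hδ : δ ∈ Set.Ioo 0 (Real.pi / 2)) :
    ∃ F : ℂ → ℂ, TendstoUniformlyOn
      (fun m s => ∑ n ∈ Finset.range m, a n * Complex.exp (-(lam n : ℂ) * s)) F atTop
      {s : ℂ | |Complex.arg (s - s₀)| ≤ Real.pi / 2 - δ} := by
  obtain ⟨hδ_pos, hδ_lt⟩ := hδ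
  have hsin : 0 < Real.sin δ := Real.sin_pos_of_pos_of_lt_pi hδ_pos (by linarith)
  have hsector : {s : ℂ | |Complex.arg (s - s₀)| ≤ Real.pi / 2 - δ}
      ⊆ {s | ‖s - s₀‖ ≤ (Real.sin δ)⁻¹ * (s - s₀).re} := by
    intro s hs
    rw [mem_ofPred_eq, inv_mul_eq_div, le_div_iff₀ hsin]
    exact norm_mul_sin_le_re_of_abs_arg_le hδ_pos.le hs
  exact ((uniformCauchySeqOn_dirichlet_of_cauchySeq hmono.monotone hnonneg hconv.cauchySeq
    (inv_nonneg.mpr hsin.le)).mono hsector).exists_tendstoUniformlyOn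

/-- If a general Dirichlet series converges at `s₀`, then for every `δ ∈ (0, π/2)` it
converges uniformly on the angular region `{s : |arg (s - s₀)| ≤ π/2 - δ}`. -/
theorem stmt_0 (lam : ℕ → ℝ) (hmono : StrictMono lam) (hnonneg : ∀ n, 0 ≤ lam n)
    (hunb : Tendsto lam atTop atTop) (a : ℕ → ℂ) (s₀ : ℂ) (L : ℂ)
    (hconv : Tendsto (fun m => ∑ n ∈ Finset.range m, a n * Complex.exp (-(lam n : ℂ) * s₀))
      atTop (𝓝 L))
    (δ : ℝ) (hδ : δ ∈ Set.Ioo 0 (Real.pi / 2)) :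
    ∃ F : ℂ → ℂ, TendstoUniformlyOn
      (fun m s => ∑ n ∈ Finset.range m, a n * Complex.exp (-(lam n : ℂ) * s)) F atTop
      {s : ℂ | |Complex.arg (s - s₀)| ≤ Real.pi / 2 - δ} :=
  stmt_0_general lam hmono hnonneg a s₀ L hconv δ hδ
end

section
/- Let f be holomorphic on the right half-plane ℂ₊ and suppose f′ is bounded on a fat approach region Ω(ζ) to a point ζ ∈ iℝ. Then f has a finite nontangential limit at ζ. -/
open Complex Filter Set MeasureTheory
open scoped Real Topology NNReal

/-- `Ω` is a fat approach region (relative to the right half-plane) to the point `i t₀`. -/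
def IsFatApproachRegion (t₀ : ℝ) (Ω : Set ℂ) : Prop :=
  ∃ (a b : ℝ) (φ : ℝ → ℝ) (K : NNReal), 0 < a ∧ 0 < b ∧
    LipschitzOnWith K φ (Set.Icc (-a) a) ∧ (∀ y ∈ Set.Icc (-a) a, 0 ≤ φ y) ∧
    MeasureTheory.IntegrableOn (fun y => φ y / y ^ 2) (Set.Icc (-a) a) ∧
    Ω = {s : ℂ | |s.im - t₀| < a ∧ φ (s.im - t₀) < s.re ∧ s.re < b}

/-- `f` has nontangential limit `L` at `ζ`: convergence within every Stolz region. -/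
def HasNTLimitAt (f : ℂ → ℂ) (ζ L : ℂ) : Prop :=
  ∀ δ ∈ Set.Ioo 0 (Real.pi / 2),
    Filter.Tendsto f
      (nhdsWithin ζ {s : ℂ | s ≠ ζ ∧ |Complex.arg (s - ζ)| ≤ Real.pi / 2 - δ}) (nhds L)

/-! The Lipschitz bound and the integrability of `φ(y) / y²` force `φ(y) = o(|y|)`: if
`φ(y) > ε|y|`, then `φ ≥ ε|y|/2` on the interval of radius `η|y|` around `y` (with `η ≈ ε/K`),
where `φ(x) / x² ≥ ε / (8|y|)`; that interval therefore carries at least `εη/4` of the integral,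
which absolute continuity of the integral forbids for small `y`. Hence `Ω` contains, near `i t₀`,
a truncated cone of every aperture. On such a convex cone the bound on `f'` makes `f` Lipschitz,
so `f` has a limit at the apex; the limits along nested cones agree, and every Stolz angle lies
near `i t₀` inside one of the cones. -/

lemma UniformContinuousOn.exists_tendsto_nhdsWithin {α β : Type*} [UniformSpace α]
    [UniformSpace β] [CompleteSpace β] {f : α → β} {s : Set α} {x : α}
    (hf : UniformContinuousOn f s) (hx : x ∈ closure s) :
    ∃ L, Tendsto f (𝓝[s] x) (𝓝 L) :=
  haveI := mem_closure_iff_nhdsWithin_neBot.mp hx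
  CompleteSpace.complete ((cauchy_nhds.mono nhdsWithin_le_nhds).map_of_le hf inf_le_right)

lemma Convex.exists_tendsto_nhdsWithin_of_norm_deriv_le {𝕜 G : Type*} [RCLike 𝕜]
    [NormedAddCommGroup G] [NormedSpace 𝕜 G] [CompleteSpace G] {f : 𝕜 → G} {s : Set 𝕜}
    {x : 𝕜} {C : ℝ} (hs : Convex ℝ s) (hf : ∀ y ∈ s, DifferentiableAt 𝕜 f y)
    (hC : ∀ y ∈ s, ‖deriv f y‖ ≤ C) (hx : x ∈ closure s) :
    ∃ L, Tendsto f (𝓝[s] x) (𝓝 L) := by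
  have hlip : LipschitzOnWith C.toNNReal f s := hs.lipschitzOnWith_of_nnnorm_deriv_le hf
    fun y hy => NNReal.coe_le_coe.mp ((hC y hy).trans (Real.le_coe_toNNReal C))
  exact hlip.uniformContinuousOn.exists_tendsto_nhdsWithin hx

lemma le_setIntegral_div_sq_of_mul_abs_lt {φ : ℝ → ℝ} {K : ℝ≥0} {U : Set ℝ} {ε η y : ℝ}
    (hlip : LipschitzOnWith K φ U) (hint : IntegrableOn (fun x => φ x / x ^ 2) U)
    (hη : 0 < η) (hη_half : η ≤ 1 / 2) (hKη : K * η ≤ ε / 2) (hy : y ≠ 0)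
    (hball : Metric.closedBall y (η * |y|) ⊆ U) (hφy : ε * |y| < φ y) :
    ε * η / 4 ≤ ∫ x in Metric.closedBall y (η * |y|), φ x / x ^ 2 := by
  have hy_pos : 0 < |y| := abs_pos.mpr hy
  have hε : 0 ≤ ε := by nlinarith [K.coe_nonneg]
  have hyU : y ∈ U := hball (Metric.mem_closedBall_self (by positivity : 0 ≤ η * |y|))
  have hbound : ∀ x ∈ Metric.closedBall y (η * |y|), ε / (8 * |y|) ≤ φ x / x ^ 2 := by
    intro x hx
    have hxy : |x - y| ≤ η * |y| := by rwa [Metric.mem_closedBall, Real.dist_eq] at hx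
    have hφx : ε * |y| / 2 ≤ φ x := by
      have hlip_xy : |φ x - φ y| ≤ K * |x - y| := by
        simpa only [Real.dist_eq] using hlip.dist_le_mul x (hball hx) y hyU
      have : K * |x - y| ≤ K * (η * |y|) := by gcongr
      nlinarith [abs_le.mp hlip_xy]
    have hx_lower : |y| / 2 ≤ |x| := by
      have := abs_sub_abs_le_abs_sub y x
      rw [abs_sub_comm] at this
      nlinarith
    have hx_upper : |x| ≤ 2 * |y| := by
      have := abs_sub_abs_le_abs_sub x y
      nlinarith
    have hx_sq : 0 < x ^ 2 := by nlinarith [sq_abs x]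
    rw [le_div_iff₀ hx_sq, ← sq_abs x]
    calc ε / (8 * |y|) * |x| ^ 2 ≤ ε / (8 * |y|) * (2 * |y|) ^ 2 := by gcongr
      _ = ε * |y| / 2 := by field_simp; ring
      _ ≤ φ x := hφx
  have hvol : volume.real (Metric.closedBall y (η * |y|)) = 2 * (η * |y|) := by
    rw [Real.volume_real_closedBall (by positivity)]
  calc ε * η / 4 = volume.real (Metric.closedBall y (η * |y|)) • (ε / (8 * |y|)) := by
        rw [hvol, smul_eq_mul]; field_simp; ring
    _ ≤ _ := setIntegral_ge_of_const_le measurableSet_closedBall measure_closedBall_lt_top.ne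
        hbound (hint.mono_set hball)

lemma tendsto_volume_closedBall_mul_abs (η : ℝ) :
    Tendsto (fun y : ℝ => volume (Metric.closedBall y (η * |y|))) (𝓝 0) (𝓝 0) := by
  simp only [Real.volume_closedBall]
  rw [← ENNReal.ofReal_zero]
  exact ENNReal.tendsto_ofReal (by simpa using ((continuous_abs.const_mul η).const_mul 2).tendsto 0)

lemma eventually_closedBall_mul_abs_subset {U : Set ℝ} (hU : U ∈ 𝓝 0) {η : ℝ} (hη : η ≤ 1) :
    ∀ᶠ y in 𝓝 0, Metric.closedBall y (η * |y|) ⊆ U := by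
  obtain ⟨ρ, hρ, hρU⟩ := Metric.mem_nhds_iff.mp hU
  filter_upwards [Metric.ball_mem_nhds 0 (half_pos hρ)] with y hy x hx
  apply hρU
  rw [Metric.mem_ball, Real.dist_eq, sub_zero] at hy ⊢
  rw [Metric.mem_closedBall, Real.dist_eq] at hx
  have := abs_sub_abs_le_abs_sub x y
  nlinarith [abs_nonneg y]

lemma eventually_le_mul_abs_of_integrableOn_div_sq {φ : ℝ → ℝ} {K : ℝ≥0} {U : Set ℝ}
    (hU : U ∈ 𝓝 0) (hlip : LipschitzOnWith K φ U)
    (hint : IntegrableOn (fun x => φ x / x ^ 2) U) {ε : ℝ} (hε : 0 < ε) :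
    ∀ᶠ y in 𝓝 0, φ y ≤ ε * |y| := by
  set η := ε / (2 * (K + ε))
  have hη : 0 < η := by positivity
  have hη_half : η ≤ 1 / 2 := by
    rw [div_le_div_iff₀ (by positivity) two_pos]; nlinarith [K.coe_nonneg]
  have hKη : K * η ≤ ε / 2 := by
    rw [mul_div_assoc', div_le_div_iff₀ (by positivity) two_pos]; nlinarith [K.coe_nonneg]
  have hball := eventually_closedBall_mul_abs_subset hU (hη_half.trans (by norm_num))
  have hsmall : ∀ᶠ y in 𝓝 0, ∫ x in Metric.closedBall y (η * |y|), φ x / x ^ 2 < ε * η / 4 := by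
    have hvol := tendsto_of_tendsto_of_tendsto_of_le_of_le tendsto_const_nhds
      (tendsto_volume_closedBall_mul_abs η) (fun _ => zero_le)
      (fun y => Measure.restrict_apply_le U (Metric.closedBall y (η * |y|)))
    have hpos : (0 : ℝ) < ε * η / 4 := by positivity
    filter_upwards [(hint.tendsto_setIntegral_nhds_zero hvol).eventually_lt_const hpos, hball]
      with y hy hyU
    rwa [Measure.restrict_restrict measurableSet_closedBall, inter_eq_left.mpr hyU] at hy
  have hpunctured : ∀ᶠ y in 𝓝 0, y ≠ 0 → φ y ≤ ε * |y| := by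
    filter_upwards [hball, hsmall] with y hy_ball hy_small hy
    by_contra! hφy
    exact hy_small.not_ge
      (le_setIntegral_div_sq_of_mul_abs_lt hlip hint hη hη_half hKη hy hy_ball hφy)
  have hφ0 : φ 0 ≤ 0 := by
    have hcont : Tendsto φ (𝓝[≠] 0) (𝓝 (φ 0)) :=
      ((hlip.continuousOn).continuousAt hU).tendsto.mono_left nhdsWithin_le_nhds
    have hlin : Tendsto (fun y : ℝ => ε * |y|) (𝓝[≠] 0) (𝓝 0) := by
      simpa using ((continuous_abs.const_mul ε).tendsto 0).mono_left nhdsWithin_le_nhds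
    exact le_of_tendsto_of_tendsto hcont hlin (eventually_nhdsWithin_iff.mpr hpunctured)
  filter_upwards [hpunctured] with y hy
  rcases eq_or_ne y 0 with rfl | hy0
  · simpa using hφ0
  · exact hy hy0

def truncatedCone (ζ : ℂ) (m r : ℝ) : Set ℂ :=
  {s | 0 < (s - ζ).re ∧ (s - ζ).re < r ∧ |(s - ζ).im| ≤ m * (s - ζ).re}

lemma truncatedCone_mono {ζ : ℂ} {m m' r r' : ℝ} (hm : m ≤ m') (hr : r ≤ r') :
    truncatedCone ζ m r ⊆ truncatedCone ζ m' r' :=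
  fun _ ⟨hre, hr', him⟩ => ⟨hre, hr'.trans_le hr, him.trans (by gcongr)⟩

lemma convex_truncatedCone (ζ : ℂ) (m r : ℝ) : Convex ℝ (truncatedCone ζ m r) := by
  intro x ⟨hx₁, hx₂, hx₃⟩ y ⟨hy₁, hy₂, hy₃⟩ a b ha hb hab
  have hsub : a • x + b • y - ζ = a • (x - ζ) + b • (y - ζ) := by
    rw [smul_sub, smul_sub, sub_add_sub_comm, ← add_smul, hab, one_smul]
  simp only [truncatedCone, mem_ofPred_eq, hsub, add_re, add_im, smul_re, smul_im, smul_eq_mul]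
  obtain ⟨hre₁, hre₂⟩ := convex_Ioo 0 r ⟨hx₁, hx₂⟩ ⟨hy₁, hy₂⟩ ha hb hab
  refine ⟨hre₁, hre₂, ?_⟩
  calc |a * (x - ζ).im + b * (y - ζ).im| ≤ |a * (x - ζ).im| + |b * (y - ζ).im| := abs_add_le _ _
    _ = a * |(x - ζ).im| + b * |(y - ζ).im| := by
      rw [abs_mul, abs_mul, abs_of_nonneg ha, abs_of_nonneg hb]
    _ ≤ m * (a * (x - ζ).re + b * (y - ζ).re) := by nlinarith

lemma mem_closure_truncatedCone (ζ : ℂ) {m r : ℝ} (hm : 0 ≤ m) (hr : 0 < r) :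
    ζ ∈ closure (truncatedCone ζ m r) := by
  have hpath : Tendsto (fun t : ℝ => ζ + t) (𝓝[>] 0) (𝓝 ζ) :=
    ((show Continuous fun t : ℝ => ζ + t by fun_prop).tendsto' 0 ζ (by simp)).mono_left
      nhdsWithin_le_nhds
  refine mem_closure_of_tendsto hpath ?_
  filter_upwards [Ioo_mem_nhdsGT hr] with t ht
  simp [truncatedCone, ht.1, ht.2, hm]

lemma abs_im_le_tan_mul_re_of_abs_arg_le {w : ℂ} {θ : ℝ} (hθ : θ < π / 2)
    (harg : |arg w| ≤ θ) : |w.im| ≤ Real.tan θ * w.re := by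
  rcases abs_arg_lt_pi_div_two_iff.mp (harg.trans_lt hθ) with hre | rfl
  · have hθ₀ : 0 ≤ θ := (abs_nonneg _).trans harg
    have htan : |Real.tan (arg w)| ≤ Real.tan θ := by
      obtain ⟨hlo, hhi⟩ := abs_le.mp harg
      have hmem : ∀ x, |x| ≤ θ → x ∈ Ioo (-(π / 2)) (π / 2) := fun x hx =>
        abs_lt.mp (hx.trans_lt hθ)
      have hθθ : |θ| ≤ θ := (abs_of_nonneg hθ₀).le
      refine abs_le.mpr ⟨?_, Real.strictMonoOn_tan.monotoneOn (hmem _ harg) (hmem θ hθθ) hhi⟩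
      rw [← Real.tan_neg]
      exact Real.strictMonoOn_tan.monotoneOn (hmem (-θ) ((abs_neg θ).trans_le hθθ))
        (hmem _ harg) hlo
    rwa [tan_arg, abs_div, abs_of_pos hre, div_le_iff₀ hre] at htan
  · simp

lemma hasNTLimitAt_of_forall_truncatedCone {f : ℂ → ℂ} {ζ L : ℂ}
    (h : ∀ m > 0, ∃ r > 0, Tendsto f (𝓝[truncatedCone ζ m r] ζ) (𝓝 L)) :
    HasNTLimitAt f ζ L := by
  rintro δ ⟨hδ, hδ'⟩
  obtain ⟨r, hr, hL⟩ := h (Real.tan (π / 2 - δ))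
    (Real.tan_pos_of_pos_of_lt_pi_div_two (by linarith) (by linarith))
  rw [nhdsWithin_restrict' _ (Metric.ball_mem_nhds ζ hr)]
  refine hL.mono_left (nhdsWithin_mono _ ?_)
  rintro s ⟨⟨hne, harg⟩, hball⟩
  have hre : 0 < (s - ζ).re := by
    refine (abs_arg_lt_pi_div_two_iff.mp (harg.trans_lt (by linarith))).resolve_right ?_
    exact sub_ne_zero.mpr hne
  refine ⟨hre, (re_le_norm _).trans_lt ?_, abs_im_le_tan_mul_re_of_abs_arg_le (by linarith) harg⟩
  rwa [← dist_eq_norm]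

lemma exists_tendsto_forall_truncatedCone {f : ℂ → ℂ} {ζ : ℂ}
    (h : ∀ m > 0, ∃ r > 0, ∃ L, Tendsto f (𝓝[truncatedCone ζ m r] ζ) (𝓝 L)) :
    ∃ L, ∀ m > 0, ∃ r > 0, Tendsto f (𝓝[truncatedCone ζ m r] ζ) (𝓝 L) := by
  obtain ⟨r₁, hr₁, L, hL⟩ := h 1 one_pos
  refine ⟨L, fun m hm => ?_⟩
  obtain ⟨r, hr, L', hL'⟩ := h m hm
  refine ⟨r, hr, ?_⟩
  have := mem_closure_iff_nhdsWithin_neBot.mp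
    (mem_closure_truncatedCone ζ (le_min zero_le_one hm.le) (lt_min hr₁ hr))
  have hcone (m' r' : ℝ) (hm' : min 1 m ≤ m') (hr' : min r₁ r ≤ r') := 
    nhdsWithin_mono ζ (truncatedCone_mono (ζ := ζ) hm' hr')
  rwa [tendsto_nhds_unique (hL'.mono_left (hcone m r (min_le_right _ _) (min_le_right _ _)))
    (hL.mono_left (hcone 1 r₁ (min_le_left _ _) (min_le_left _ _)))] at hL'

lemma IsFatApproachRegion.exists_truncatedCone_subset {t₀ : ℝ} {Ω : Set ℂ}
    (hΩ : IsFatApproachRegion t₀ Ω) {m : ℝ} (hm : 0 ≤ m) :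
    ∃ r > 0, truncatedCone (I * t₀) m r ⊆ Ω := by
  obtain ⟨a, b, φ, K, ha, hb, hlip, -, hint, rfl⟩ := hΩ
  have hφ : ∀ᶠ y in 𝓝 0, φ y ≤ (m + 1)⁻¹ * |y| :=
    eventually_le_mul_abs_of_integrableOn_div_sq (Icc_mem_nhds (neg_lt_zero.mpr ha) ha) hlip
      hint (by positivity)
  obtain ⟨ρ, hρ, hρφ⟩ := Metric.eventually_nhds_iff.mp hφ
  refine ⟨min b (min a ρ / (m + 1)), by positivity, ?_⟩
  rintro s ⟨hre, hr, him⟩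
  have hsub_re : (s - I * t₀).re = s.re := by simp
  have hsub_im : (s - I * t₀).im = s.im - t₀ := by simp
  rw [hsub_re] at hre hr
  rw [hsub_re, hsub_im] at him
  have hr' := (lt_div_iff₀ (by positivity : (0 : ℝ) < m + 1)).mp (hr.trans_le (min_le_right _ _))
  have hy : |s.im - t₀| < min a ρ := by nlinarith
  refine ⟨hy.trans_le (min_le_left _ _), ?_, hr.trans_le (min_le_left _ _)⟩
  calc φ (s.im - t₀) ≤ (m + 1)⁻¹ * |s.im - t₀| :=
        hρφ (by simpa using hy.trans_le (min_le_right _ _))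
    _ ≤ (m + 1)⁻¹ * (m * s.re) := by gcongr
    _ < s.re := by
      rw [← div_eq_inv_mul, div_lt_iff₀ (by positivity)]
      linarith

/-- If `f` is holomorphic on the right half-plane and `f'` is bounded on a fat approach
region to `i t₀`, then `f` has a finite nontangential limit at `i t₀`. -/
theorem stmt_9 (f : ℂ → ℂ) (hf : DifferentiableOn ℂ f {s : ℂ | 0 < s.re})
    (t₀ : ℝ) (Ω : Set ℂ) (hΩ : IsFatApproachRegion t₀ Ω)
    (hbd : ∃ C : ℝ, ∀ s ∈ Ω, ‖deriv f s‖ ≤ C) :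
    ∃ L : ℂ, HasNTLimitAt f (Complex.I * t₀) L := by
  obtain ⟨C, hC⟩ := hbd
  have hopen : IsOpen {s : ℂ | 0 < s.re} := isOpen_lt continuous_const continuous_re
  refine (exists_tendsto_forall_truncatedCone fun m hm => ?_).imp
    fun L => hasNTLimitAt_of_forall_truncatedCone
  obtain ⟨r, hr, hsub⟩ := hΩ.exists_truncatedCone_subset hm.le
  have hre : ∀ s ∈ truncatedCone (I * t₀) m r, 0 < s.re := fun s hs => by
    simpa [truncatedCone] using hs.1
  exact ⟨r, hr, (convex_truncatedCone _ m r).exists_tendsto_nhdsWithin_of_norm_deriv_le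
    (fun s hs => hf.differentiableAt (hopen.mem_nhds (hre s hs))) (fun s hs => hC s (hsub hs))
    (mem_closure_truncatedCone _ hm.le hr)⟩
end

section
/- Suppose a subsequence (∑_{n=1}^{m_k} n^{-s}) of the partial sums of the Riemann zeta series converges pointwise on a set E contained in the line {Re s = 1}, with limit function S. Then S(s) = ζ(s) for almost every s ∈ E (with respect to linear Lebesgue measure on the line). -/
open Complex Filter Set MeasureTheory
open scoped Real Topology FourierTransform

/-!
For `t ≠ 0`, comparing `∑_{n ≤ N} n^{-1-it}` with `∫^N y^{-1-it} dy = N^{-it}/(-it)` shows that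
the difference converges (its increments are `O(N⁻²)` by a second-order mean value estimate).
Hence convergence of the partial sums along `m_k` at `1 + it` forces convergence of
`m_k^{-it} = e^{-it log m_k}`. Such a sequence of characters with frequencies `log m_k → ∞`
converges only on a null set: if `e^{itx_k} → c(t)` on a set `B` of finite positive measure,
then `∫_B e^{-itx_k} c(t) dt → |B|` by dominated convergence, whereas it tends to `0` by the
Riemann–Lebesgue lemma. So `E` itself is null and the claim holds vacuously almost everywhere.
-/

theorem norm_sub_sub_smul_le_of_hasDerivWithinAt {E : Type*} [NormedAddCommGroup E]
    [NormedSpace ℝ E] {G g g' : ℝ → E} {a b C : ℝ} (hab : a ≤ b)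
    (hG : ∀ y ∈ Icc a b, HasDerivWithinAt G (g y) (Icc a b) y)
    (hg : ∀ y ∈ Icc a b, HasDerivWithinAt g (g' y) (Icc a b) y)
    (hC : ∀ y ∈ Icc a b, ‖g' y‖ ≤ C) :
    ‖G b - G a - (b - a) • g b‖ ≤ C * (b - a) ^ 2 := by
  have hb : b ∈ Icc a b := right_mem_Icc.2 hab
  have hg_sub : ∀ y ∈ Icc a b, ‖g y - g b‖ ≤ C * (b - a) := fun y hy => by
    rw [norm_sub_rev]
    calc ‖g b - g y‖ ≤ C * ‖b - y‖ :=
          (convex_Icc a b).norm_image_sub_le_of_norm_hasDerivWithin_le hg hC hy hb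
      _ ≤ C * (b - a) := by
          gcongr
          · exact (norm_nonneg _).trans (hC b hb)
          · rw [Real.norm_of_nonneg (by linarith [hy.2])]; linarith [hy.1]
  have hH : ∀ y ∈ Icc a b,
      HasDerivWithinAt (fun y => G y - y • g b) (g y - g b) (Icc a b) y := fun y hy => by
    convert (hG y hy).sub ((hasDerivWithinAt_id y _).smul_const (g b)) using 1
    · rfl
    · rw [one_smul]
  have := (convex_Icc a b).norm_image_sub_le_of_norm_hasDerivWithin_le hH hg_sub
    (left_mem_Icc.2 hab) hb
  rw [Real.norm_of_nonneg (sub_nonneg.2 hab)] at this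
  calc ‖G b - G a - (b - a) • g b‖ = ‖G b - b • g b - (G a - a • g b)‖ := by
        rw [sub_smul]; congr 1; abel
    _ ≤ C * (b - a) ^ 2 := by linarith

noncomputable def correctedZetaSum (s : ℂ) (N : ℕ) : ℂ :=
  ∑ n ∈ Finset.range N, ((n : ℂ) + 1) ^ (-(1 + s)) - (N : ℂ) ^ (-s) / (-s)

lemma norm_correctedZetaSum_succ_sub_le {s : ℂ} (hs0 : s ≠ 0) (hs : -1 < s.re) {N : ℕ}
    (hN : 1 ≤ N) :
    ‖correctedZetaSum s (N + 1) - correctedZetaSum s N‖ ≤ ‖s + 1‖ * (N : ℝ) ^ (-s.re - 2) := by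
  have hN0 : (0 : ℝ) < N := by exact_mod_cast hN
  have hpos : ∀ y ∈ Icc (N : ℝ) (N + 1), 0 < y := fun y hy => hN0.trans_le hy.1
  have hG : ∀ y ∈ Icc (N : ℝ) (N + 1), HasDerivWithinAt (fun y : ℝ => (y : ℂ) ^ (-s) / (-s))
      ((y : ℂ) ^ (-s - 1)) (Icc (N : ℝ) (N + 1)) y := fun y hy => by
    have := (hasDerivAt_ofReal_cpow_const (hpos y hy).ne' (neg_ne_zero.2 hs0)).div_const (-s)
    rw [mul_div_cancel_left₀ _ (neg_ne_zero.2 hs0)] at this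
    exact this.hasDerivWithinAt
  have hg : ∀ y ∈ Icc (N : ℝ) (N + 1), HasDerivWithinAt (fun y : ℝ => (y : ℂ) ^ (-s - 1))
      ((-s - 1) * (y : ℂ) ^ (-s - 1 - 1)) (Icc (N : ℝ) (N + 1)) y := fun y hy => by
    refine (hasDerivAt_ofReal_cpow_const (hpos y hy).ne' fun h => ?_).hasDerivWithinAt
    rw [show s = -1 by linear_combination -h] at hs
    norm_num at hs
  have hC : ∀ y ∈ Icc (N : ℝ) (N + 1),
      ‖(-s - 1) * (y : ℂ) ^ (-s - 1 - 1)‖ ≤ ‖s + 1‖ * (N : ℝ) ^ (-s.re - 2) := fun y hy => by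
    have hre : (-s - 1 - 1).re = -s.re - 2 := by simp only [sub_re, neg_re, one_re]; ring
    rw [norm_mul, norm_cpow_eq_rpow_re_of_pos (hpos y hy), hre,
      show -s - 1 = -(s + 1) by ring, norm_neg]
    exact mul_le_mul_of_nonneg_left (Real.rpow_le_rpow_of_nonpos hN0 hy.1 (by linarith))
      (norm_nonneg _)
  have := norm_sub_sub_smul_le_of_hasDerivWithinAt (by linarith) hG hg hC
  rw [add_sub_cancel_left, one_smul, one_pow, mul_one] at this
  refine (le_of_eq ?_).trans this
  rw [← norm_neg]
  congr 1
  unfold correctedZetaSum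
  rw [Finset.sum_range_succ]
  push_cast
  ring_nf

lemma exists_tendsto_correctedZetaSum {s : ℂ} (hs0 : s ≠ 0) (hs : -1 < s.re) :
    ∃ B, Tendsto (correctedZetaSum s) atTop (𝓝 B) := by
  obtain ⟨B, hB⟩ : Summable fun N => correctedZetaSum s (N + 1) - correctedZetaSum s N :=
    .of_norm_bounded_eventually_nat ((Real.summable_nat_rpow.2 (by linarith)).mul_left ‖s + 1‖)
      ((eventually_ge_atTop 1).mono fun N hN => norm_correctedZetaSum_succ_sub_le hs0 hs hN)
  refine ⟨correctedZetaSum s 0 + B, ?_⟩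
  simpa only [Finset.sum_range_sub, add_sub_cancel] using
    hB.tendsto_sum_nat.const_add (correctedZetaSum s 0)

lemma exists_tendsto_natCast_cpow_neg_of_tendsto_sum {m : ℕ → ℕ} (hm : Tendsto m atTop atTop)
    {s S : ℂ} (hs0 : s ≠ 0) (hs : -1 < s.re)
    (h : Tendsto (fun k => ∑ n ∈ Finset.range (m k), ((n : ℂ) + 1) ^ (-(1 + s))) atTop (𝓝 S)) :
    ∃ c, Tendsto (fun k => (m k : ℂ) ^ (-s)) atTop (𝓝 c) := by
  obtain ⟨B, hB⟩ := exists_tendsto_correctedZetaSum hs0 hs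
  refine ⟨(S - B) * -s, ?_⟩
  convert (h.sub (hB.comp hm)).mul_const (-s) using 2 with k
  simp [correctedZetaSum, div_mul_cancel₀ _ (neg_ne_zero.2 hs0)]

theorem measure_eq_zero_of_tendsto_fourierChar {x : ℕ → ℝ} (hx : Tendsto x atTop (cocompact ℝ))
    {B : Set ℝ} (hB : MeasurableSet B) (hBfin : volume B ≠ ⊤) {c : ℝ → ℂ}
    (hc : ∀ t ∈ B, Tendsto (fun k => (𝐞 (t * x k) : ℂ)) atTop (𝓝 (c t))) :
    volume B = 0 := by
  have hc_norm : ∀ t ∈ B, ‖c t‖ = 1 := fun t ht =>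
    tendsto_nhds_unique (hc t ht).norm (by simp only [Circle.norm_coe, tendsto_const_nhds])
  have hc_meas : AEStronglyMeasurable c (volume.restrict B) :=
    aestronglyMeasurable_of_tendsto_ae atTop
      (fun k => (by fun_prop : Continuous fun t : ℝ => (𝐞 (t * x k) : ℂ)).aestronglyMeasurable)
      (ae_restrict_of_forall_mem hB hc)
  have h_dominated : Tendsto (fun k => ∫ t in B, 𝐞 (-(t * x k)) • c t) atTop
      (𝓝 (∫ t in B, (1 : ℂ))) := by
    refine tendsto_integral_of_dominated_convergence (fun _ => 1) (fun k => ?_)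
      (integrableOn_const hBfin).integrable (fun k => ?_) ?_
    · exact (by fun_prop : Continuous fun t : ℝ => 𝐞 (-(t * x k))).aestronglyMeasurable.smul
        hc_meas
    · refine ae_restrict_of_forall_mem hB fun t ht => ?_
      rw [Circle.norm_smul, hc_norm t ht]
    · refine ae_restrict_of_forall_mem hB fun t ht => ?_
      have hc_ne : c t ≠ 0 := norm_ne_zero_iff.1 (by rw [hc_norm t ht]; exact one_ne_zero)
      simp_rw [Circle.smul_def, AddChar.map_neg_eq_inv, Circle.coe_inv, smul_eq_mul]
      simpa [inv_mul_cancel₀ hc_ne] using ((hc t ht).inv₀ hc_ne).mul_const (c t)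
  have h_riemannLebesgue : Tendsto (fun k => ∫ t in B, 𝐞 (-(t * x k)) • c t) atTop (𝓝 0) := by
    have h_indicator : ∀ k,
        ∫ t, 𝐞 (-(t * x k)) • B.indicator c t = ∫ t in B, 𝐞 (-(t * x k)) • c t := fun k => by
      rw [← integral_indicator hB]
      simp_rw [Set.indicator_smul_apply]
    simpa only [Function.comp_def, h_indicator] using
      (Real.tendsto_integral_exp_smul_cocompact (B.indicator c)).comp hx
  have := tendsto_nhds_unique h_dominated h_riemannLebesgue
  rwa [setIntegral_const, real_smul, mul_one, ofReal_eq_zero, measureReal_eq_zero_iff hBfin] at this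

theorem volume_setOf_exists_tendsto_fourierChar {x : ℕ → ℝ}
    (hx : Tendsto x atTop (cocompact ℝ)) :
    volume {t : ℝ | ∃ c, Tendsto (fun k => (𝐞 (t * x k) : ℂ)) atTop (𝓝 c)} = 0 := by
  set D := {t : ℝ | ∃ c, Tendsto (fun k => (𝐞 (t * x k) : ℂ)) atTop (𝓝 c)}
  have hD : MeasurableSet D := StronglyMeasurable.measurableSet_exists_tendsto fun k =>
    (by fun_prop : Continuous fun t : ℝ => (𝐞 (t * x k) : ℂ)).stronglyMeasurable
  rw [measure_eq_zero_iff_ae_notMem]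
  refine ae_of_forall_measure_lt_top_ae_restrict _ fun s hs hs_fin => ?_
  rw [ae_iff, Measure.restrict_apply' hs]
  simp only [not_not, ofPred_mem_eq]
  exact measure_eq_zero_of_tendsto_fourierChar hx (hD.inter hs)
    ((measure_mono inter_subset_right).trans_lt hs_fin).ne
    (c := fun t => limUnder atTop fun k => (𝐞 (t * x k) : ℂ))
    fun t ht => tendsto_nhds_limUnder ht.1

lemma natCast_cpow_neg_I_mul_eq_fourierChar {n : ℕ} (hn : n ≠ 0) (t : ℝ) :
    (n : ℂ) ^ (-(I * t)) = 𝐞 (t * (-Real.log n / (2 * π))) := by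
  rw [cpow_def_of_ne_zero (Nat.cast_ne_zero.2 hn), Real.fourierChar_apply, ← ofReal_natCast,
    ← ofReal_log (Nat.cast_nonneg n)]
  congr 1
  push_cast
  field_simp

/-- If a subsequence of the partial sums `∑_{n=1}^{m_k} n^{-s}` converges pointwise on a
set `E` of the line `{Re s = 1}` (parametrised as `1 + it`, `t ∈ E`), then the limit
function equals `ζ(s)` at almost every point of `E`. -/
theorem stmt_11 (m : ℕ → ℕ) (hm : StrictMono m) (E : Set ℝ) (S : ℝ → ℂ)
    (hconv : ∀ t ∈ E,
      Tendsto (fun k => ∑ n ∈ Finset.range (m k), ((n : ℂ) + 1) ^ (-(1 + Complex.I * t)))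
        atTop (𝓝 (S t))) :
    ∀ᵐ t : ℝ, t ∈ E → S t = riemannZeta (1 + Complex.I * t) := by
  set x : ℕ → ℝ := fun k => -Real.log (m k) / (2 * π)
  have hx : Tendsto x atTop (cocompact ℝ) :=
    ((tendsto_neg_atTop_atBot.comp (Real.tendsto_log_atTop.comp
      (tendsto_natCast_atTop_atTop.comp hm.tendsto_atTop))).atBot_div_const
        (by positivity)).mono_right atBot_le_cocompact
  have hE : E ⊆ {t | ∃ c, Tendsto (fun k => (𝐞 (t * x k) : ℂ)) atTop (𝓝 c)} ∪ {0} := by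
    intro t ht
    rcases eq_or_ne t 0 with rfl | ht0
    · exact Or.inr rfl
    obtain ⟨c, hc⟩ := exists_tendsto_natCast_cpow_neg_of_tendsto_sum hm.tendsto_atTop
      (s := I * t) (by simpa using ht0) (by simp) (hconv t ht)
    refine Or.inl ⟨c, hc.congr' ?_⟩
    filter_upwards [hm.tendsto_atTop.eventually_ne_atTop 0] with k hk
    exact natCast_cpow_neg_I_mul_eq_fourierChar hk t
  have hE_null : volume E = 0 := measure_mono_null hE
    (measure_union_null (volume_setOf_exists_tendsto_fourierChar hx) (measure_singleton 0))
  exact (measure_eq_zero_iff_ae_notMem.1 hE_null).mono fun t ht htE => absurd htE ht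
end
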